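/- For every N ≥ 1 divisible by 4, ∑_{i,j ∈ {0,1}^N} Tr(A₀^{i₁j₁}⋯A₀^{i_Nj_N}) |i⟩⟨j| = 𝟙 on (ℂ²)^{⊗N}, where A₀^{00} = [[0,−1,1],[0,1,−1],[0,0,0]], A₀^{11} = [[0,1,1],[0,1,1],[0,0,0]], and A₀^{01} = A₀^{10} = 0. -/

import Mathlib

open Matrix

noncomputable section

/-- The matrix product operator generated by a rank-4 tensor `A` (physical dimension `d`,
bond dimension `D`) with periodic boundary conditions:
`∑_{i,j} Tr(A^{i₁j₁}⋯A^{i_Nj_N}) |i₁…i_N⟩⟨j₁…j_N|`. -/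
def mpo {d D : ℕ} (A : Fin d → Fin d → Matrix (Fin D) (Fin D) ℂ) (N : ℕ) :
    Matrix (Fin N → Fin d) (Fin N → Fin d) ℂ :=
  Matrix.of fun f g => Matrix.trace (((List.finRange N).map fun k => A (f k) (g k)).prod)

/-- The bond-dimension-3 MPO tensor `A₀` with `A₀^{00} = [[0,−1,1],[0,1,−1],[0,0,0]]`,
`A₀^{11} = [[0,1,1],[0,1,1],[0,0,0]]` and `A₀^{01} = A₀^{10} = 0`. -/
def A0 : Fin 2 → Fin 2 → Matrix (Fin 3) (Fin 3) ℂ := fun i j =>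
  if i = 0 ∧ j = 0 then !![0, -1, 1; 0, 1, -1; 0, 0, 0]
  else if i = 1 ∧ j = 1 then !![0, 1, 1; 0, 1, 1; 0, 0, 0]
  else 0

/-!
Off the diagonal some factor `A₀^{i_k j_k}` vanishes, so the entry is `0`. On the diagonal every
factor has the shape `!![0, *, *; 0, 1, *; 0, 0, 0]`. For such matrices the middle entry of a
product is the product of the middle entries, because the first column and the last row vanish;
so the shape is closed under multiplication, and the trace of any nonempty product is the middle
entry `1`.
-/

theorem mpo_apply_eq_zero_of_ne {d D : ℕ} {A : Fin d → Fin d → Matrix (Fin D) (Fin D) ℂ}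
    (hA : ∀ i j, i ≠ j → A i j = 0) {N : ℕ} {f g : Fin N → Fin d} (hfg : f ≠ g) :
    mpo A N f g = 0 := by
  obtain ⟨k, hk⟩ := Function.ne_iff.mp hfg
  have hzero : (0 : Matrix (Fin D) (Fin D) ℂ) ∈ (List.finRange N).map fun k => A (f k) (g k) :=
    List.mem_map.mpr ⟨k, List.mem_finRange k, hA _ _ hk⟩
  rw [mpo, of_apply, List.prod_eq_zero hzero, trace_zero]

section IsMiddleUnit

variable {R : Type*} [Semiring R] {M N : Matrix (Fin 3) (Fin 3) R}

def IsMiddleUnit (M : Matrix (Fin 3) (Fin 3) R) : Prop :=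
  (∀ i, M i 0 = 0) ∧ (∀ j, M 2 j = 0) ∧ M 1 1 = 1

theorem IsMiddleUnit.mul (hM : IsMiddleUnit M) (hN : IsMiddleUnit N) :
    IsMiddleUnit (M * N) := by
  obtain ⟨hM0, hM2, hM1⟩ := hM
  obtain ⟨hN0, hN2, hN1⟩ := hN
  refine ⟨fun i => ?_, fun j => ?_, ?_⟩ <;>
    simp [mul_apply, Fin.sum_univ_three, hM0, hM2, hM1, hN0, hN2, hN1]

theorem IsMiddleUnit.trace_eq_one (hM : IsMiddleUnit M) : M.trace = 1 := by
  obtain ⟨hM0, hM2, hM1⟩ := hM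
  simp [trace_fin_three, hM0, hM2, hM1]

end IsMiddleUnit

theorem isMiddleUnit_A0_self (i : Fin 2) : IsMiddleUnit (A0 i i) := by
  fin_cases i <;> simp [IsMiddleUnit, A0, Fin.forall_fin_succ]

theorem A0_eq_zero_of_ne {i j : Fin 2} (hij : i ≠ j) : A0 i j = 0 := by
  fin_cases i <;> fin_cases j <;> simp_all [A0]

theorem mpo_A0_eq_one_general (N : ℕ) (hN : 1 ≤ N) :
    mpo A0 N = 1 := by
  ext f g
  rw [one_apply]
  split_ifs with hfg
  · subst hfg
    have hne : (List.finRange N).map (fun k => A0 (f k) (f k)) ≠ [] := by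
      simp only [ne_eq, List.map_eq_nil_iff, List.finRange_eq_nil_iff]
      omega
    refine IsMiddleUnit.trace_eq_one
      (List.prod_induction_nonempty _ (fun _ _ => IsMiddleUnit.mul) hne ?_)
    simp only [List.mem_map]
    rintro _ ⟨k, -, rfl⟩
    exact isMiddleUnit_A0_self (f k)
  · exact mpo_apply_eq_zero_of_ne (fun _ _ => A0_eq_zero_of_ne) hfg

/-- For every `N ≥ 1` divisible by 4, the MPO generated by `A₀` with periodic boundary
conditions is the identity on `(ℂ²)^{⊗N}`. -/
theorem mpo_A0_eq_one (N : ℕ) (hN : 1 ≤ N) (h4 : 4 ∣ N) :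
    mpo A0 N = 1 :=
  mpo_A0_eq_one_general N hN
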